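/- For all nonnegative integers $e$ and $n$, and any variable $q$, $\sum_{k=0}^n \binom{n}{k}_q q^{k^2+ek} \prod_{j=k+1+e}^{n+e}(1-q^j) = 1$, where $\binom{n}{k}_q$ denotes the Gaussian ($q$-)binomial coefficient. -/

import Mathlib

/-- The indeterminate `q`, viewed in the field of rational functions over `ℚ`. -/
noncomputable def q : RatFunc ℚ := RatFunc.X

/-- The Gaussian (q-)binomial coefficient `(n choose k)_q`,
defined by `∏_{i=0}^{k-1} (1 - q^(n-i)) / (1 - q^(i+1))`. -/
noncomputable def qbinom (n k : ℕ) : RatFunc ℚ :=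
  ∏ i ∈ Finset.range k, (1 - q ^ (n - i)) / (1 - q ^ (i + 1))

/-! Write `S e n` for the left-hand side. Splitting `qbinom (n + 1) (k + 1)` by the `q`-Pascal rule
`[n+1, k+1] = q^(k+1) [n, k+1] + [n, k]` and peeling the factor `1 - q^(k+1+e)` off the product
turns the `(k+1)`-st summand of `S e (n + 1)` into the `k`-th summand of `S (e + 1) n` plus a
difference of consecutive values of an auxiliary term. Hence `S e (n + 1) = S (e + 1) n` by
telescoping, and induction on `n` reduces everything to `S e 0 = 1`. -/

open Finset Polynomial

lemma one_sub_q_pow_ne_zero {m : ℕ} (hm : m ≠ 0) : (1 : RatFunc ℚ) - q ^ m ≠ 0 := by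
  rw [sub_ne_zero, ne_comm, q, ← RatFunc.algebraMap_X, ← map_pow,
    ← map_one (algebraMap ℚ[X] _), (RatFunc.algebraMap_injective ℚ).ne_iff]
  intro h
  simpa [hm] using congrArg natDegree h

@[simp] lemma qbinom_zero_right (n : ℕ) : qbinom n 0 = 1 := prod_range_zero _

lemma qbinom_succ_right_mul (n k : ℕ) :
    qbinom n (k + 1) * (1 - q ^ (k + 1)) = qbinom n k * (1 - q ^ (n - k)) := by
  rw [qbinom, prod_range_succ, ← qbinom, mul_assoc,
    div_mul_cancel₀ _ (one_sub_q_pow_ne_zero k.add_one_ne_zero)]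

lemma qbinom_succ_self (n : ℕ) : qbinom n (n + 1) = 0 := by
  simpa [one_sub_q_pow_ne_zero] using qbinom_succ_right_mul n n

lemma qbinom_succ_succ_mul (n k : ℕ) :
    qbinom (n + 1) (k + 1) * (1 - q ^ (k + 1)) = qbinom n k * (1 - q ^ (n + 1)) := by
  simp only [qbinom, prod_div_distrib]
  rw [prod_range_succ' (fun i ↦ 1 - q ^ (n + 1 - i)), prod_range_succ (fun i ↦ 1 - q ^ (i + 1))]
  simp only [Nat.add_sub_add_right, Nat.sub_zero]
  field_simp [one_sub_q_pow_ne_zero k.add_one_ne_zero]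

lemma qbinom_succ_succ {n k : ℕ} (hk : k ≤ n) :
    qbinom (n + 1) (k + 1) = q ^ (k + 1) * qbinom n (k + 1) + qbinom n k := by
  apply mul_right_cancel₀ (one_sub_q_pow_ne_zero k.add_one_ne_zero)
  have hpow : q ^ (n + 1) = q ^ (k + 1) * q ^ (n - k) := by rw [← pow_add]; congr 1; omega
  rw [qbinom_succ_succ_mul, add_mul, mul_assoc, qbinom_succ_right_mul, hpow]
  ring

noncomputable def qterm (e n k : ℕ) : RatFunc ℚ :=
  qbinom n k * q ^ (k ^ 2 + e * k) * ∏ j ∈ Icc (k + 1 + e) (n + e), (1 - q ^ j)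

/-- The part of `qterm e (n + 1) k` contributed by the summand `q ^ k * qbinom n k` of the
`q`-Pascal rule for `qbinom (n + 1) k`. -/
noncomputable def qtermTelescope (e n k : ℕ) : RatFunc ℚ :=
  qbinom n k * q ^ (k ^ 2 + (e + 1) * k) * ∏ j ∈ Icc (k + 1 + e) (n + 1 + e), (1 - q ^ j)

lemma qtermTelescope_zero (e n : ℕ) : qtermTelescope e n 0 = qterm e (n + 1) 0 := by
  simp [qtermTelescope, qterm]

lemma qtermTelescope_succ_self (e n : ℕ) : qtermTelescope e n (n + 1) = 0 := by
  simp [qtermTelescope, qbinom_succ_self]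

lemma qterm_succ_succ {e n k : ℕ} (hk : k ≤ n) :
    qterm e (n + 1) (k + 1) =
      qterm (e + 1) n k + (qtermTelescope e n (k + 1) - qtermTelescope e n k) := by
  have hprod : ∏ j ∈ Icc (k + 1 + e) (n + 1 + e), (1 - q ^ j) =
      (1 - q ^ (k + 1 + e)) * ∏ j ∈ Icc (k + 2 + e) (n + 1 + e), (1 - q ^ j) := by
    rw [← mul_prod_Ioc_eq_prod_Icc (by omega), ← Icc_add_one_left_eq_Ioc,
      show k + 2 + e = k + 1 + e + 1 by omega]
  have hpow : q ^ ((k + 1) ^ 2 + e * (k + 1)) = q ^ (k ^ 2 + (e + 1) * k) * q ^ (k + 1 + e) := by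
    rw [← pow_add]; congr 1; ring
  have hpow' : q ^ ((k + 1) ^ 2 + (e + 1) * (k + 1)) =
      q ^ (k + 1) * (q ^ (k ^ 2 + (e + 1) * k) * q ^ (k + 1 + e)) := by
    rw [← pow_add, ← pow_add]; congr 1; ring
  simp only [qterm, qtermTelescope, qbinom_succ_succ hk, hprod, hpow, hpow',
    show k + 1 + 1 + e = k + 2 + e by omega, show k + 1 + (e + 1) = k + 2 + e by omega,
    show n + (e + 1) = n + 1 + e by omega]
  ring

lemma sum_qterm_succ (e n : ℕ) :
    ∑ k ∈ range (n + 2), qterm e (n + 1) k = ∑ k ∈ range (n + 1), qterm (e + 1) n k := by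
  rw [sum_range_succ',
    sum_congr rfl fun k hk ↦ qterm_succ_succ (Nat.lt_succ_iff.1 (mem_range.1 hk)),
    sum_add_distrib, sum_range_sub, qtermTelescope_succ_self, qtermTelescope_zero]
  ring

/-- For all nonnegative integers `e` and `n`,
`∑_{k=0}^n (n choose k)_q q^(k²+ek) ∏_{j=k+1+e}^{n+e} (1-q^j) = 1`. -/
theorem sum_qbinom_identity (e n : ℕ) :
    ∑ k ∈ Finset.range (n + 1),
      qbinom n k * q ^ (k ^ 2 + e * k) * ∏ j ∈ Finset.Icc (k + 1 + e) (n + e), (1 - q ^ j)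
    = 1 := by
  change ∑ k ∈ range (n + 1), qterm e n k = 1
  induction n generalizing e with
  | zero => simp [qterm]
  | succ n ih => rw [sum_qterm_succ, ih]
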